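/- arXiv:2409.06295 — 3 statements merged into one kernel-verified Lean document; each statement's English description precedes it below -/
import Mathlib

section
/- The Dobrushin coefficient is sub-multiplicative: for any two Markov transition kernels K and R on a measurable space X, δ(K ∘ R) ≤ δ(K) · δ(R), where δ(K) := sup over pairs of points x, x' in X of the total variation distance between K(x, ·) and K(x', ·). -/
open MeasureTheory ProbabilityTheory

/-!
Fix probability measures `μ, ν` and a measurable `f` with values in `[M - C, M]`. A Hahn set `s`
for `μ - ν` splits `∫ f dμ - ∫ f dν` into a part on `s`, where `μ ≥ ν`, which is at most
`M (μ s - ν s)`, and a part on `sᶜ`, where `μ ≤ ν`, which is at most `-(M - C) (μ s - ν s)`.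
Hence `∫ f dμ - ∫ f dν ≤ C · sup_A (μ A - ν A)`. Taking `μ = K(x,·)`, `ν = K(x',·)` and
`f = R(·, A)`, whose oscillation is at most `δ(R)`, gives `δ(K ∘ R) ≤ δ(K) δ(R)`.
-/

/-- Total variation distance between two measures:
`‖μ - ν‖_TV = sup over measurable A of |μ(A) - ν(A)|`. -/
noncomputable def tvDist {X : Type*} [MeasurableSpace X] (μ ν : Measure X) : ℝ :=
  ⨆ A : {s : Set X // MeasurableSet s}, |(μ A.1).toReal - (ν A.1).toReal|

/-- Dobrushin coefficient of a kernel: `δ(K) = sup_{x,x'} ‖K(x,·) - K(x',·)‖_TV`. -/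
noncomputable def dobrushin {X : Type*} [MeasurableSpace X] (K : Kernel X X) : ℝ :=
  ⨆ p : X × X, tvDist (K p.1) (K p.2)

section TotalVariation

variable {X : Type*} [MeasurableSpace X]

lemma tvDist_nonneg (μ ν : Measure X) : 0 ≤ tvDist μ ν :=
  Real.iSup_nonneg fun _ => abs_nonneg _

lemma abs_measureReal_sub_le_one (μ ν : Measure X) [IsProbabilityMeasure μ]
    [IsProbabilityMeasure ν] (A : Set X) : |μ.real A - ν.real A| ≤ 1 :=
  abs_sub_le_of_nonneg_of_le measureReal_nonneg measureReal_le_one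
    measureReal_nonneg measureReal_le_one

lemma tvDist_le_one (μ ν : Measure X) [IsProbabilityMeasure μ] [IsProbabilityMeasure ν] :
    tvDist μ ν ≤ 1 :=
  Real.iSup_le (fun A => abs_measureReal_sub_le_one μ ν A.1) zero_le_one

lemma abs_measureReal_sub_le_tvDist (μ ν : Measure X) [IsProbabilityMeasure μ]
    [IsProbabilityMeasure ν] {A : Set X} (hA : MeasurableSet A) :
    |μ.real A - ν.real A| ≤ tvDist μ ν :=
  le_ciSup (f := fun B : {s : Set X // MeasurableSet s} => |μ.real B.1 - ν.real B.1|)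
    ⟨1, Set.forall_mem_range.2 fun B => abs_measureReal_sub_le_one μ ν B.1⟩ ⟨A, hA⟩

lemma dobrushin_nonneg (K : Kernel X X) : 0 ≤ dobrushin K :=
  Real.iSup_nonneg fun _ => tvDist_nonneg _ _

lemma tvDist_le_dobrushin (K : Kernel X X) [IsMarkovKernel K] (x x' : X) :
    tvDist (K x) (K x') ≤ dobrushin K :=
  le_ciSup (f := fun p : X × X => tvDist (K p.1) (K p.2))
    ⟨1, by rintro _ ⟨p, rfl⟩; exact tvDist_le_one _ _⟩ (x, x')

lemma measureReal_sub_le_dobrushin (K : Kernel X X) [IsMarkovKernel K] (x x' : X) {A : Set X}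
    (hA : MeasurableSet A) : (K x).real A - (K x').real A ≤ dobrushin K :=
  (le_abs_self _).trans <|
    (abs_measureReal_sub_le_tvDist _ _ hA).trans (tvDist_le_dobrushin K x x')

end TotalVariation

section IntegralDifference

variable {X : Type*} [MeasurableSpace X]

lemma integral_sub_integral_le_of_le {μ ν : Measure X} [IsFiniteMeasure μ] (hνμ : ν ≤ μ)
    {f : X → ℝ} (hf : Integrable f μ) {M : ℝ} (hM : ∀ᵐ y ∂μ, f y ≤ M) :
    ∫ y, f y ∂μ - ∫ y, f y ∂ν ≤ M * (μ.real Set.univ - ν.real Set.univ) := by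
  have hmono : ∫ y, M - f y ∂ν ≤ ∫ y, M - f y ∂μ :=
    integral_mono_measure hνμ (hM.mono fun y => sub_nonneg.2) ((integrable_const M).sub hf)
  have : IsFiniteMeasure ν := isFiniteMeasure_of_le μ hνμ
  rw [integral_sub (integrable_const M) (hf.mono_measure hνμ),
    integral_sub (integrable_const M) hf, integral_const, integral_const, smul_eq_mul,
    smul_eq_mul] at hmono
  linarith

lemma integral_sub_integral_le_of_sub_le (μ ν : Measure X) [IsProbabilityMeasure μ]
    [IsProbabilityMeasure ν] {f : X → ℝ} (hf : Measurable f) {C : ℝ}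
    (hC : ∀ y y', f y - f y' ≤ C) {D : ℝ}
    (hD : ∀ s, MeasurableSet s → μ.real s - ν.real s ≤ D) :
    ∫ y, f y ∂μ - ∫ y, f y ∂ν ≤ C * D := by
  have hX : Nonempty X := nonempty_of_isProbabilityMeasure μ
  have hbdd : BddAbove (Set.range f) := ⟨f hX.some + C, by
    rintro _ ⟨y, rfl⟩
    linarith [hC y hX.some]⟩
  set M := ⨆ y, f y
  have hfM : ∀ y, f y ≤ M := le_ciSup hbdd
  have hMf : ∀ y, M - C ≤ f y := fun y =>
    sub_le_iff_le_add.2 <| ciSup_le fun y' => by linarith [hC y' y]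
  have hfi : ∀ ρ : Measure X, [IsFiniteMeasure ρ] → Integrable f ρ := fun ρ _ =>
    .of_bound hf.aestronglyMeasurable (max |M - C| |M|) <|
      ae_of_all _ fun y => abs_le_max_abs_abs (hMf y) (hfM y)
  obtain ⟨s, hs, hνμ, hμν⟩ := exists_isHahnDecomposition ν μ
  have h_on : ∫ y in s, f y ∂μ - ∫ y in s, f y ∂ν ≤ M * (μ.real s - ν.real s) := by
    simpa using integral_sub_integral_le_of_le hνμ (hfi _) (ae_of_all _ hfM)
  have h_off : ∫ y in sᶜ, f y ∂μ - ∫ y in sᶜ, f y ∂ν ≤ (M - C) * (μ.real sᶜ - ν.real sᶜ) := by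
    have := integral_sub_integral_le_of_le hμν (hfi _).neg
      (ae_of_all _ fun y => neg_le_neg (hMf y))
    simp only [Pi.neg_apply, integral_neg, measureReal_restrict_apply_univ] at this
    linarith
  have hC0 : 0 ≤ C := by linarith [hMf hX.some, hfM hX.some]
  have hCD : C * (μ.real s - ν.real s) ≤ C * D := mul_le_mul_of_nonneg_left (hD s hs) hC0
  rw [measureReal_compl hs, measureReal_compl hs, probReal_univ, probReal_univ] at h_off
  rw [← integral_add_compl hs (hfi μ), ← integral_add_compl hs (hfi ν)]
  linarith

end IntegralDifference

lemma ProbabilityTheory.Kernel.measureReal_comp_apply {X Y Z : Type*} [MeasurableSpace X]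
    [MeasurableSpace Y] [MeasurableSpace Z] (η : Kernel Y Z) [IsFiniteKernel η]
    (κ : Kernel X Y) (x : X) {A : Set Z} (hA : MeasurableSet A) :
    ((η ∘ₖ κ) x).real A = ∫ y, (η y).real A ∂(κ x) := by
  rw [measureReal_def, Kernel.comp_apply' η κ x hA,
    ← integral_toReal (η.measurable_coe hA).aemeasurable (ae_of_all _ fun _ => measure_lt_top _ _)]
  rfl

lemma measureReal_comp_sub_le_dobrushin_mul {X : Type*} [MeasurableSpace X] (K R : Kernel X X)
    [IsMarkovKernel K] [IsMarkovKernel R] (x x' : X) {A : Set X} (hA : MeasurableSet A) :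
    ((R ∘ₖ K) x).real A - ((R ∘ₖ K) x').real A ≤ dobrushin K * dobrushin R := by
  rw [Kernel.measureReal_comp_apply R K x hA, Kernel.measureReal_comp_apply R K x' hA, mul_comm]
  exact integral_sub_integral_le_of_sub_le (K x) (K x') (R.measurable_coe hA).ennreal_toReal
    (fun y y' => measureReal_sub_le_dobrushin R y y' hA)
    (fun s hs => measureReal_sub_le_dobrushin K x x' hs)

/-- The paper's `K ∘ R`, `(K ∘ R)(x, A) = ∫ R(y, A) K(x, dy)`, is `R ∘ₖ K` in Mathlib. -/
theorem dobrushin_comp_le {X : Type*} [MeasurableSpace X] (K R : Kernel X X)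
    [IsMarkovKernel K] [IsMarkovKernel R] :
    dobrushin (R ∘ₖ K) ≤ dobrushin K * dobrushin R := by
  have hδ : 0 ≤ dobrushin K * dobrushin R := mul_nonneg (dobrushin_nonneg K) (dobrushin_nonneg R)
  refine Real.iSup_le (fun p => Real.iSup_le (fun A => ?_) hδ) hδ
  exact abs_sub_le_iff.2 ⟨measureReal_comp_sub_le_dobrushin_mul K R p.1 p.2 A.2,
    measureReal_comp_sub_le_dobrushin_mul K R p.2 p.1 A.2⟩
end

section
/- Let Q be a Markov transition kernel on a measurable space X with density q with respect to a probability measure λ satisfying 0 < σ⁻ ≤ q(x, x') for all x, x'. Then Q admits a unique invariant probability measure π, and for every x ∈ X and n ∈ ℕ, ‖Qⁿ(x, ·) - π‖_TV ≤ (1 - σ⁻)ⁿ. -/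
open MeasureTheory ProbabilityTheory

/-- `kernelIterate Q n μ` is the distribution obtained from `μ` after `n` steps of the
Markov kernel `Q`; in particular `kernelIterate Q n (dirac x) = Qⁿ(x, ·)`. -/
noncomputable def kernelIterate {X : Type*} [MeasurableSpace X] (Q : Kernel X X) :
    ℕ → Measure X → Measure X
  | 0, μ => μ
  | n + 1, μ => (kernelIterate Q n μ).bind (fun x => Q x)

/-!
Doeblin's argument. The density bound says that every `Q x` dominates the measure
`ν = σ⁻ • λ` of mass `σ⁻`, so `Q x = R x + ν` with a residual kernel `R` of constant mass
`1 - σ⁻`. Iterating, `Qⁿ μ = Sₙ + Rⁿ μ` for every probability measure `μ`, where `Sₙ` does not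
depend on `μ`: two chains started anywhere agree except on a part of mass `(1 - σ⁻)ⁿ`.
This contraction gives the total variation bound and uniqueness, and `π = ∑ₖ Rᵏ ν`, the law
obtained by regenerating from `ν` and running `R`, is a probability measure fixed by `Q`.
-/

open scoped ENNReal

lemma ENNReal.abs_toReal_add_sub_toReal_add_le {s a b c : ℝ≥0∞} (hs : s ≠ ∞) (hc : c ≠ ∞)
    (ha : a ≤ c) (hb : b ≤ c) : |(s + a).toReal - (s + b).toReal| ≤ c.toReal := by
  have ha' := ENNReal.toReal_mono hc ha
  have hb' := ENNReal.toReal_mono hc hb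
  rw [ENNReal.toReal_add hs (ne_top_of_le_ne_top hc ha),
    ENNReal.toReal_add hs (ne_top_of_le_ne_top hc hb), abs_le]
  constructor <;> linarith [a.toReal_nonneg, b.toReal_nonneg]

lemma tvDist_le {X : Type*} [MeasurableSpace X] {μ ν : Measure X} {r : ℝ} (hr : 0 ≤ r)
    (h : ∀ A, MeasurableSet A → |(μ A).toReal - (ν A).toReal| ≤ r) : tvDist μ ν ≤ r :=
  Real.iSup_le (fun A => h A.1 A.2) hr

lemma MeasureTheory.Measure.eq_of_abs_toReal_sub_le_pow {X : Type*} [MeasurableSpace X]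
    {μ ν : Measure X} [IsFiniteMeasure μ] [IsFiniteMeasure ν] {r : ℝ} (hr₀ : 0 ≤ r)
    (hr₁ : r < 1) (h : ∀ n : ℕ, ∀ A, MeasurableSet A → |(μ A).toReal - (ν A).toReal| ≤ r ^ n) :
    μ = ν := by
  ext A hA
  have hle : |(μ A).toReal - (ν A).toReal| ≤ 0 :=
    ge_of_tendsto' (tendsto_pow_atTop_nhds_zero_of_lt_one hr₀ hr₁) (h · A hA)
  rw [abs_nonpos_iff, sub_eq_zero] at hle
  exact (ENNReal.toReal_eq_toReal_iff' (measure_ne_top μ A) (measure_ne_top ν A)).mp hle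

namespace ProbabilityTheory.Kernel

variable {α β : Type*} {mα : MeasurableSpace α} {mβ : MeasurableSpace β}
  {κ : Kernel α β} {ν : Measure β} [IsFiniteMeasure ν]

lemma smul_le_of_le_density {lam : Measure β} {f : α → β → ℝ≥0∞} {c : ℝ≥0∞}
    (hκ : ∀ a s, MeasurableSet s → κ a s = ∫⁻ b in s, f a b ∂lam) (hc : ∀ a b, c ≤ f a b)
    (a : α) : c • lam ≤ κ a := by
  refine Measure.le_iff.mpr fun s hs => ?_
  calc (c • lam) s = ∫⁻ _ in s, c ∂lam := by
        rw [MeasureTheory.setLIntegral_const, Measure.smul_apply, smul_eq_mul]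
    _ ≤ ∫⁻ b in s, f a b ∂lam := lintegral_mono (hc a)
    _ = κ a s := (hκ a s hs).symm

noncomputable def residual (κ : Kernel α β) (ν : Measure β) [IsFiniteMeasure ν]
    (h : ∀ a, ν ≤ κ a) : Kernel α β where
  toFun a := κ a - ν
  measurable' := by
    refine Measure.measurable_of_measurable_coe _ fun s hs => ?_
    simp_rw [Measure.sub_apply hs (h _)]
    exact (κ.measurable_coe hs).sub measurable_const

lemma residual_apply (h : ∀ a, ν ≤ κ a) (a : α) : κ.residual ν h a = κ a - ν := rfl

lemma residual_add_const (h : ∀ a, ν ≤ κ a) : κ.residual ν h + const α ν = κ := by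
  ext1 a
  rw [FunLike.coe_add, Pi.add_apply, const_apply, residual_apply,
    Measure.sub_add_cancel_of_le (h a)]

lemma residual_apply_univ [IsMarkovKernel κ] (h : ∀ a, ν ≤ κ a) (a : α) :
    κ.residual ν h a Set.univ = 1 - ν Set.univ := by
  rw [residual_apply, Measure.sub_apply .univ (h a), measure_univ]

lemma comp_eq_residual_comp_add (h : ∀ a, ν ≤ κ a) (μ : Measure α) :
    κ ∘ₘ μ = κ.residual ν h ∘ₘ μ + μ Set.univ • ν := by
  conv_lhs => rw [← residual_add_const h]
  rw [Measure.add_comp, Measure.const_comp]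

end ProbabilityTheory.Kernel

section kernelIterate

variable {X : Type*} [MeasurableSpace X] {Q : Kernel X X} {μ : Measure X}

lemma kernelIterate_succ (n : ℕ) : kernelIterate Q (n + 1) μ = Q ∘ₘ kernelIterate Q n μ := rfl

lemma kernelIterate_apply_univ {c : ℝ≥0∞} (hQ : ∀ x, Q x Set.univ = c) (n : ℕ) :
    kernelIterate Q n μ Set.univ = c ^ n * μ Set.univ := by
  induction n with
  | zero => rw [pow_zero, one_mul]; rfl
  | succ n ih =>
    rw [kernelIterate_succ, Measure.bind_apply .univ Q.aemeasurable]
    simp_rw [hQ]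
    rw [lintegral_const, ih, pow_succ, mul_comm, mul_right_comm]

instance isProbabilityMeasure_kernelIterate [IsMarkovKernel Q] [IsProbabilityMeasure μ]
    (n : ℕ) : IsProbabilityMeasure (kernelIterate Q n μ) := by
  induction n with
  | zero => assumption
  | succ n ih => rw [kernelIterate_succ]; infer_instance

lemma kernelIterate_of_comp_eq (hμ : Q ∘ₘ μ = μ) (n : ℕ) : kernelIterate Q n μ = μ := by
  induction n with
  | zero => rfl
  | succ n ih => rw [kernelIterate_succ, ih, hμ]

end kernelIterate

section Doeblin

variable {X : Type*} [MeasurableSpace X] {Q : Kernel X X} [IsMarkovKernel Q] {ν : Measure X}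

lemma measure_univ_le_one_of_le_kernel (hν : ∀ x, ν ≤ Q x) (hν₀ : ν Set.univ ≠ 0) :
    ν Set.univ ≤ 1 := by
  obtain ⟨x, -⟩ := nonempty_of_measure_ne_zero hν₀
  exact (hν x Set.univ).trans_eq measure_univ

variable [IsFiniteMeasure ν]

lemma exists_kernelIterate_eq_add_residual (hν : ∀ x, ν ≤ Q x) (n : ℕ) :
    ∃ S : Measure X, ∀ (μ : Measure X) [IsProbabilityMeasure μ],
      kernelIterate Q n μ = S + kernelIterate (Q.residual ν hν) n μ := by
  induction n with
  | zero => exact ⟨0, fun μ _ => (zero_add _).symm⟩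
  | succ n ih =>
    obtain ⟨S, hS⟩ := ih
    refine ⟨Q.residual ν hν ∘ₘ S + ν, fun μ _ => ?_⟩
    rw [kernelIterate_succ, Q.comp_eq_residual_comp_add hν, measure_univ, one_smul, hS μ,
      Measure.comp_add, kernelIterate_succ]
    abel

lemma abs_toReal_kernelIterate_sub_le (hν : ∀ x, ν ≤ Q x) (μ μ' : Measure X)
    [IsProbabilityMeasure μ] [IsProbabilityMeasure μ'] (n : ℕ) (A : Set X) :
    |(kernelIterate Q n μ A).toReal - (kernelIterate Q n μ' A).toReal|
      ≤ ((1 - ν Set.univ) ^ n).toReal := by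
  obtain ⟨S, hS⟩ := exists_kernelIterate_eq_add_residual hν n
  have hR : ∀ (ρ : Measure X) [IsProbabilityMeasure ρ],
      kernelIterate (Q.residual ν hν) n ρ A ≤ (1 - ν Set.univ) ^ n := fun ρ _ =>
    calc kernelIterate (Q.residual ν hν) n ρ A ≤ kernelIterate (Q.residual ν hν) n ρ Set.univ :=
          measure_mono (Set.subset_univ A)
      _ = (1 - ν Set.univ) ^ n := by
          rw [kernelIterate_apply_univ (Q.residual_apply_univ hν), measure_univ (μ := ρ), mul_one]
  have hSA : S A ≠ ∞ := by
    refine ne_top_of_le_ne_top (measure_ne_top (kernelIterate Q n μ) A) ?_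
    rw [hS μ, Measure.add_apply]
    exact le_self_add
  rw [hS μ, hS μ', Measure.add_apply, Measure.add_apply]
  exact ENNReal.abs_toReal_add_sub_toReal_add_le hSA
    (ENNReal.pow_ne_top (ne_top_of_le_ne_top ENNReal.one_ne_top tsub_le_self)) (hR μ) (hR μ')

variable (Q ν) in
noncomputable def doeblinMeasure (hν : ∀ x, ν ≤ Q x) : Measure X :=
  Measure.sum fun k => kernelIterate (Q.residual ν hν) k ν

lemma isProbabilityMeasure_doeblinMeasure (hν : ∀ x, ν ≤ Q x) (hν₀ : ν Set.univ ≠ 0) :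
    IsProbabilityMeasure (doeblinMeasure Q ν hν) := by
  constructor
  simp_rw [doeblinMeasure, Measure.sum_apply _ .univ,
    kernelIterate_apply_univ (Q.residual_apply_univ hν), ENNReal.tsum_mul_right,
    ENNReal.tsum_geometric,
    ENNReal.sub_sub_cancel ENNReal.one_ne_top (measure_univ_le_one_of_le_kernel hν hν₀)]
  exact ENNReal.inv_mul_cancel hν₀ (measure_ne_top ν _)

lemma comp_doeblinMeasure (hν : ∀ x, ν ≤ Q x) (hν₀ : ν Set.univ ≠ 0) :
    Q ∘ₘ doeblinMeasure Q ν hν = doeblinMeasure Q ν hν := by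
  have := isProbabilityMeasure_doeblinMeasure hν hν₀
  rw [Q.comp_eq_residual_comp_add hν, measure_univ, one_smul, doeblinMeasure,
    Measure.bind_sum _ _ (Q.residual ν hν).aemeasurable]
  ext A hA
  rw [Measure.add_apply, Measure.sum_apply _ hA, Measure.sum_apply _ hA,
    tsum_eq_zero_add' (f := fun k => kernelIterate (Q.residual ν hν) k ν A) ENNReal.summable,
    add_comm]
  rfl

theorem doeblin (hν : ∀ x, ν ≤ Q x) (hν₀ : ν Set.univ ≠ 0) :
    ∃ π : Measure X, IsProbabilityMeasure π ∧ Q ∘ₘ π = π ∧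
      (∀ π' : Measure X, IsProbabilityMeasure π' → Q ∘ₘ π' = π' → π' = π) ∧
      ∀ (μ : Measure X) [IsProbabilityMeasure μ] (n : ℕ),
        tvDist (kernelIterate Q n μ) π ≤ (1 - (ν Set.univ).toReal) ^ n := by
  have hπ := isProbabilityMeasure_doeblinMeasure hν hν₀
  have hinv := comp_doeblinMeasure hν hν₀
  have hν₁ := measure_univ_le_one_of_le_kernel hν hν₀
  have hr₀ : 0 ≤ 1 - (ν Set.univ).toReal :=
    sub_nonneg.mpr (ENNReal.toReal_le_of_le_ofReal zero_le_one (by rwa [ENNReal.ofReal_one]))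
  have hr₁ : 1 - (ν Set.univ).toReal < 1 :=
    sub_lt_self _ (ENNReal.toReal_pos hν₀ (measure_ne_top ν _))
  have hcontr : ∀ (μ μ' : Measure X) [IsProbabilityMeasure μ] [IsProbabilityMeasure μ'] n A,
      |(kernelIterate Q n μ A).toReal - (kernelIterate Q n μ' A).toReal|
        ≤ (1 - (ν Set.univ).toReal) ^ n := by
    intro μ μ' _ _ n A
    rw [← ENNReal.toReal_one, ← ENNReal.toReal_sub_of_le hν₁ ENNReal.one_ne_top,
      ← ENNReal.toReal_pow]
    exact abs_toReal_kernelIterate_sub_le hν μ μ' n A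
  set π := doeblinMeasure Q ν hν
  refine ⟨π, hπ, hinv, fun π' _ hπ' => ?_, fun μ _ n => ?_⟩
  · refine Measure.eq_of_abs_toReal_sub_le_pow hr₀ hr₁ fun n A _ => ?_
    simpa only [kernelIterate_of_comp_eq hπ', kernelIterate_of_comp_eq hinv] using hcontr π' π n A
  · refine tvDist_le (pow_nonneg hr₀ n) fun A _ => ?_
    simpa only [kernelIterate_of_comp_eq hinv] using hcontr μ π n A

end Doeblin

theorem unique_invariant_and_geometric_ergodicity_general {X : Type*} [MeasurableSpace X]
    (lam : Measure X) [IsProbabilityMeasure lam]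
    (Q : Kernel X X) [IsMarkovKernel Q]
    (q : X → X → ℝ) (σm : ℝ) (hσm : 0 < σm)
    (hq_lb : ∀ x x', σm ≤ q x x')
    (hQ : ∀ x : X, ∀ A : Set X, MeasurableSet A →
      Q x A = ∫⁻ x' in A, ENNReal.ofReal (q x x') ∂lam) :
    ∃ π : Measure X, IsProbabilityMeasure π ∧ π.bind (fun x => Q x) = π ∧
      (∀ π' : Measure X, IsProbabilityMeasure π' → π'.bind (fun x => Q x) = π' → π' = π) ∧
      ∀ x : X, ∀ n : ℕ,
        tvDist (kernelIterate Q n (Measure.dirac x)) π ≤ (1 - σm) ^ n := by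
  have := lam.smul_finite (ENNReal.ofReal_ne_top (r := σm))
  have hν : ∀ x, ENNReal.ofReal σm • lam ≤ Q x :=
    Q.smul_le_of_le_density hQ fun x x' => ENNReal.ofReal_le_ofReal (hq_lb x x')
  have hmass : (ENNReal.ofReal σm • lam) Set.univ = ENNReal.ofReal σm := by
    rw [Measure.smul_apply, measure_univ, smul_eq_mul, mul_one]
  obtain ⟨π, hπ, hinv, huniq, hconv⟩ := doeblin hν (by simpa [hmass] using hσm)
  rw [hmass, ENNReal.toReal_ofReal hσm.le] at hconv
  exact ⟨π, hπ, hinv, huniq, fun x n => hconv (Measure.dirac x) n⟩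

/-- If a Markov kernel `Q` admits a density `q ≥ σ⁻ > 0` with respect to a probability
measure `lam`, then `Q` has a unique invariant probability measure `π` and is uniformly
geometrically ergodic: `‖Qⁿ(x,·) - π‖_TV ≤ (1 - σ⁻)ⁿ`. -/
theorem unique_invariant_and_geometric_ergodicity {X : Type*} [MeasurableSpace X]
    (lam : Measure X) [IsProbabilityMeasure lam]
    (Q : Kernel X X) [IsMarkovKernel Q]
    (q : X → X → ℝ) (σm : ℝ) (hσm : 0 < σm)
    (hq_meas : Measurable (Function.uncurry q))
    (hq_lb : ∀ x x', σm ≤ q x x')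
    (hQ : ∀ x : X, ∀ A : Set X, MeasurableSet A →
      Q x A = ∫⁻ x' in A, ENNReal.ofReal (q x x') ∂lam) :
    ∃ π : Measure X, IsProbabilityMeasure π ∧ π.bind (fun x => Q x) = π ∧
      (∀ π' : Measure X, IsProbabilityMeasure π' → π'.bind (fun x => Q x) = π' → π' = π) ∧
      ∀ x : X, ∀ n : ℕ,
        tvDist (kernelIterate Q n (Measure.dirac x)) π ≤ (1 - σm) ^ n :=
  unique_invariant_and_geometric_ergodicity_general lam Q q σm hσm hq_lb hQ
end

section
/- Let ρ ∈ (0, 1/√2). There exists a finite constant C (depending only on ρ) such that for all integers k ≥ 1, ∑_{j=0}^{⌊k/2⌋} ρ^{k-j-1} (1 + ∑_{q=1}^{j} 2^{q-1} ρ^q) ≤ C (k ρ^{k/2} + (2ρ²)^{k/2}). -/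
open Finset

private lemma geom_aux {ρ : ℝ} (h0 : 0 ≤ ρ) (h1 : ρ < 1) (n : ℕ) :
    ∑ i ∈ range n, ρ ^ i ≤ 1 / (1 - ρ) := by
  have h := Summable.sum_le_tsum (range n) (fun i _ => pow_nonneg h0 i)
    (summable_geometric_of_lt_one h0 h1)
  rwa [tsum_geometric_of_lt_one h0 h1, ← one_div] at h

private lemma outer_aux {ρ : ℝ} (h0 : 0 < ρ) (h1 : ρ < 1) (k : ℕ) (hk : 1 ≤ k) :
    ∑ j ∈ range (k / 2 + 1), ρ ^ (k - j - 1) ≤ ρ ^ ((k : ℝ) / 2) / (ρ * (1 - ρ)) := by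
  have hm : k / 2 + 1 ≤ k := by omega
  have step1 : ∑ j ∈ range (k / 2 + 1), ρ ^ (k - j - 1)
      = ρ ^ (k - k / 2 - 1) * ∑ j ∈ range (k / 2 + 1), ρ ^ j := by
    rw [mul_sum]
    rw [← Finset.sum_range_reflect (fun j => ρ ^ (k - k / 2 - 1) * ρ ^ j) (k / 2 + 1)]
    apply sum_congr rfl
    intro j hj
    simp only [mem_range] at hj
    rw [← pow_add]
    congr 1
    omega
  rw [step1]
  have h2 : ρ ^ (k - k / 2 - 1) ≤ ρ ^ ((k : ℝ) / 2) / ρ := by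
    have hd : ρ ^ ((k : ℝ) / 2) / ρ = ρ ^ ((k : ℝ) / 2 - 1) := by
      rw [Real.rpow_sub h0, Real.rpow_one]
    rw [hd, ← Real.rpow_natCast ρ (k - k/2 - 1)]
    apply Real.rpow_le_rpow_of_exponent_ge h0 h1.le
    have hc : ((k / 2 : ℕ) : ℝ) ≤ (k : ℝ) / 2 := by exact_mod_cast Nat.cast_div_le
    have : ((k - k / 2 - 1 : ℕ) : ℝ) = (k : ℝ) - ((k / 2 : ℕ) : ℝ) - 1 := by
      have : (k : ℝ) = ((k - k/2 - 1 : ℕ) : ℝ) + ((k / 2 : ℕ) : ℝ) + 1 := by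
        exact_mod_cast congrArg (Nat.cast : ℕ → ℝ) (by omega : k = (k - k/2 - 1) + k/2 + 1)
      linarith
    rw [this]
    linarith
  have h3 := geom_aux h0.le h1 (k / 2 + 1)
  calc ρ ^ (k - k / 2 - 1) * ∑ j ∈ range (k / 2 + 1), ρ ^ j
      ≤ (ρ ^ ((k : ℝ) / 2) / ρ) * (1 / (1 - ρ)) := by
        apply mul_le_mul h2 h3 (sum_nonneg fun i _ => pow_nonneg h0.le i)
        positivity
    _ = ρ ^ ((k : ℝ) / 2) / (ρ * (1 - ρ)) := by
        field_simp

/-- For `ρ ∈ (0, 1/√2)` there is a finite constant `C` (depending only on `ρ`) such that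
for all `k ≥ 1`,
`∑_{j=0}^{⌊k/2⌋} ρ^{k-j-1} (1 + ∑_{q=1}^{j} 2^{q-1} ρ^q) ≤ C (k ρ^{k/2} + (2ρ²)^{k/2})`. -/
theorem exists_const_half_sum_bound (ρ : ℝ) (h0 : 0 < ρ) (h1 : ρ < 1 / Real.sqrt 2) :
    ∃ C : ℝ, ∀ k : ℕ, 1 ≤ k →
      ∑ j ∈ Finset.range (k / 2 + 1),
          ρ ^ (k - j - 1) * (1 + ∑ q ∈ Finset.Icc 1 j, (2 : ℝ) ^ (q - 1) * ρ ^ q)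
        ≤ C * ((k : ℝ) * ρ ^ ((k : ℝ) / 2) + (2 * ρ ^ 2) ^ ((k : ℝ) / 2)) := by
  have hs2 : (1:ℝ) < Real.sqrt 2 := by
    nlinarith [Real.sq_sqrt (by norm_num : (0:ℝ) ≤ 2), Real.sqrt_nonneg 2]
  have hρ1 : ρ < 1 := by
    have : 1 / Real.sqrt 2 < 1 := by
      rw [div_lt_one (by positivity)]; exact hs2
    linarith
  have h1ρ : (0:ℝ) < 1 - ρ := by linarith
  have hprod : ∀ k : ℕ, ((2:ℝ) * ρ ^ 2) ^ ((k : ℝ) / 2) = 2 ^ ((k : ℝ) / 2) * ρ ^ k := by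
    intro k
    rw [Real.mul_rpow (by norm_num) (by positivity)]
    congr 1
    rw [← Real.rpow_natCast ρ 2, ← Real.rpow_mul h0.le, ← Real.rpow_natCast ρ k]
    congr 1
    push_cast
    ring
  have hY : ∀ k : ℕ, (0:ℝ) ≤ ((2:ℝ) * ρ ^ 2) ^ ((k : ℝ) / 2) := by
    intro k; positivity
  have hX : ∀ k : ℕ, (0:ℝ) ≤ ρ ^ ((k : ℝ) / 2) := by
    intro k; positivity
  rcases le_or_gt (2 * ρ) 1 with h2ρ | h2ρ
  · -- Case 2ρ ≤ 1
    refine ⟨2 / (ρ * (1 - ρ)), fun k hk => ?_⟩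
    have hinner : ∀ j ∈ range (k / 2 + 1),
        ρ ^ (k - j - 1) * (1 + ∑ q ∈ Finset.Icc 1 j, (2 : ℝ) ^ (q - 1) * ρ ^ q)
          ≤ ρ ^ (k - j - 1) * (2 * k) := by
      intro j hj
      simp only [mem_range] at hj
      apply mul_le_mul_of_nonneg_left _ (pow_nonneg h0.le _)
      have hsum : ∑ q ∈ Finset.Icc 1 j, (2 : ℝ) ^ (q - 1) * ρ ^ q ≤ j := by
        calc ∑ q ∈ Finset.Icc 1 j, (2 : ℝ) ^ (q - 1) * ρ ^ q
            ≤ ∑ q ∈ Finset.Icc 1 j, (1:ℝ) := by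
              apply sum_le_sum
              intro q hq
              have hle : (2:ℝ) ^ (q - 1) * ρ ^ q ≤ (2 * ρ) ^ q := by
                rw [mul_pow]
                have : (2:ℝ) ^ (q - 1) ≤ 2 ^ q :=
                  pow_le_pow_right₀ (by norm_num) (Nat.sub_le q 1)
                nlinarith [pow_nonneg h0.le q, pow_nonneg (by norm_num : (0:ℝ) ≤ 2) (q-1)]
              have : ((2:ℝ) * ρ) ^ q ≤ 1 := pow_le_one₀ (by positivity) h2ρ
              linarith
          _ = j := by simp
      have hjk : (j : ℝ) ≤ k := by exact_mod_cast le_trans (by omega : j ≤ k) le_rfl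
      have hk1 : (1:ℝ) ≤ k := by exact_mod_cast hk
      linarith
    calc ∑ j ∈ Finset.range (k / 2 + 1),
          ρ ^ (k - j - 1) * (1 + ∑ q ∈ Finset.Icc 1 j, (2 : ℝ) ^ (q - 1) * ρ ^ q)
        ≤ ∑ j ∈ range (k / 2 + 1), ρ ^ (k - j - 1) * (2 * k) := sum_le_sum hinner
      _ = (2 * k) * ∑ j ∈ range (k / 2 + 1), ρ ^ (k - j - 1) := by
          rw [← sum_mul]; ring
      _ ≤ (2 * k) * (ρ ^ ((k : ℝ) / 2) / (ρ * (1 - ρ))) := by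
          apply mul_le_mul_of_nonneg_left (outer_aux h0 hρ1 k hk)
          positivity
      _ = 2 / (ρ * (1 - ρ)) * ((k : ℝ) * ρ ^ ((k : ℝ) / 2)) := by
          field_simp
      _ ≤ 2 / (ρ * (1 - ρ)) * ((k : ℝ) * ρ ^ ((k : ℝ) / 2) + (2 * ρ ^ 2) ^ ((k : ℝ) / 2)) := by
          have := hY k
          have hC : (0:ℝ) ≤ 2 / (ρ * (1 - ρ)) := by positivity
          nlinarith
  · -- Case 2ρ > 1
    have hr1 : (0:ℝ) < 2 * ρ - 1 := by linarith
    refine ⟨1 / (ρ * (1 - ρ)) + 4 / (2 * ρ - 1), fun k hk => ?_⟩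
    have hterm : ∀ j ∈ range (k / 2 + 1),
        ρ ^ (k - j - 1) * (1 + ∑ q ∈ Finset.Icc 1 j, (2 : ℝ) ^ (q - 1) * ρ ^ q)
          ≤ ρ ^ (k - j - 1) + 2 ^ (j + 1) * ρ ^ k / (2 * ρ - 1) := by
      intro j hj
      simp only [mem_range] at hj
      have hjk : j + 1 ≤ k := by omega
      have hsum : ∑ q ∈ Finset.Icc 1 j, (2 : ℝ) ^ (q - 1) * ρ ^ q
          ≤ (2 * ρ) ^ (j + 1) / (2 * ρ - 1) := by
        calc ∑ q ∈ Finset.Icc 1 j, (2 : ℝ) ^ (q - 1) * ρ ^ q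
            ≤ ∑ q ∈ Finset.Icc 1 j, (2 * ρ) ^ q := by
              apply sum_le_sum
              intro q hq
              rw [mul_pow]
              have : (2:ℝ) ^ (q - 1) ≤ 2 ^ q :=
                pow_le_pow_right₀ (by norm_num) (Nat.sub_le q 1)
              nlinarith [pow_nonneg h0.le q, pow_nonneg (by norm_num : (0:ℝ) ≤ 2) (q-1)]
          _ ≤ ∑ q ∈ range (j + 1), (2 * ρ) ^ q := by
              apply sum_le_sum_of_subset_of_nonneg
              · intro q hq
                simp only [Finset.mem_Icc] at hq
                simp only [mem_range]
                omega
              · intro q _ _; positivity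
          _ = ((2 * ρ) ^ (j + 1) - 1) / (2 * ρ - 1) := by
              rw [geom_sum_eq (by linarith : (2:ℝ) * ρ ≠ 1)]
          _ ≤ (2 * ρ) ^ (j + 1) / (2 * ρ - 1) := by
              gcongr
              linarith
      have hρj : (0:ℝ) ≤ ρ ^ (k - j - 1) := pow_nonneg h0.le _
      have hpow : ρ ^ (k - j - 1) * (2 * ρ) ^ (j + 1) = 2 ^ (j + 1) * ρ ^ k := by
        rw [mul_pow, ← mul_assoc, mul_comm (ρ ^ (k - j - 1)), mul_assoc, ← pow_add]
        congr 2
        omega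
      calc ρ ^ (k - j - 1) * (1 + ∑ q ∈ Finset.Icc 1 j, (2 : ℝ) ^ (q - 1) * ρ ^ q)
          ≤ ρ ^ (k - j - 1) * (1 + (2 * ρ) ^ (j + 1) / (2 * ρ - 1)) := by
            apply mul_le_mul_of_nonneg_left _ hρj
            linarith
        _ = ρ ^ (k - j - 1) + (ρ ^ (k - j - 1) * (2 * ρ) ^ (j + 1)) / (2 * ρ - 1) := by
            ring
        _ = ρ ^ (k - j - 1) + 2 ^ (j + 1) * ρ ^ k / (2 * ρ - 1) := by rw [hpow]
    have hg2 : ∑ j ∈ range (k / 2 + 1), (2:ℝ) ^ (j + 1) ≤ 4 * 2 ^ (k / 2) := by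
      have he : ∑ j ∈ range (k / 2 + 1), (2:ℝ) ^ (j + 1)
          = 2 * ∑ j ∈ range (k / 2 + 1), (2:ℝ) ^ j := by
        rw [mul_sum]
        apply sum_congr rfl
        intro j _
        rw [pow_succ]; ring
      rw [he, geom_sum_eq (by norm_num : (2:ℝ) ≠ 1)]
      have : (2:ℝ) ^ (k / 2 + 1) = 2 * 2 ^ (k / 2) := by rw [pow_succ]; ring
      rw [this]
      norm_num
      nlinarith [pow_nonneg (by norm_num : (0:ℝ) ≤ 2) (k / 2)]
    have h2m : (2:ℝ) ^ (k / 2 : ℕ) ≤ 2 ^ ((k:ℝ) / 2) := by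
      rw [← Real.rpow_natCast 2 (k / 2)]
      apply Real.rpow_le_rpow_of_exponent_le one_le_two
      exact_mod_cast Nat.cast_div_le
    have hρk : (0:ℝ) ≤ ρ ^ k := pow_nonneg h0.le k
    calc ∑ j ∈ Finset.range (k / 2 + 1),
          ρ ^ (k - j - 1) * (1 + ∑ q ∈ Finset.Icc 1 j, (2 : ℝ) ^ (q - 1) * ρ ^ q)
        ≤ ∑ j ∈ range (k / 2 + 1), (ρ ^ (k - j - 1) + 2 ^ (j + 1) * ρ ^ k / (2 * ρ - 1)) :=
          sum_le_sum hterm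
      _ = (∑ j ∈ range (k / 2 + 1), ρ ^ (k - j - 1))
            + (∑ j ∈ range (k / 2 + 1), (2:ℝ) ^ (j + 1)) * ρ ^ k / (2 * ρ - 1) := by
          rw [sum_add_distrib, ← sum_div, ← sum_mul]
      _ ≤ ρ ^ ((k : ℝ) / 2) / (ρ * (1 - ρ))
            + (4 * 2 ^ ((k:ℝ) / 2)) * ρ ^ k / (2 * ρ - 1) := by
          apply add_le_add (outer_aux h0 hρ1 k hk)
          gcongr
          linarith
      _ = (1 / (ρ * (1 - ρ))) * ρ ^ ((k : ℝ) / 2)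
            + (4 / (2 * ρ - 1)) * ((2:ℝ) * ρ ^ 2) ^ ((k : ℝ) / 2) := by
          rw [hprod k]; ring
      _ ≤ (1 / (ρ * (1 - ρ)) + 4 / (2 * ρ - 1))
            * ((k : ℝ) * ρ ^ ((k : ℝ) / 2) + (2 * ρ ^ 2) ^ ((k : ℝ) / 2)) := by
          have hA : (0:ℝ) < 1 / (ρ * (1 - ρ)) := by positivity
          have hB : (0:ℝ) < 4 / (2 * ρ - 1) := by positivity
          have hk1 : (1:ℝ) ≤ (k:ℝ) := by exact_mod_cast hk
          have hXk : ρ ^ ((k : ℝ) / 2) ≤ (k : ℝ) * ρ ^ ((k : ℝ) / 2) := by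
            nlinarith [hX k]
          nlinarith [hY k, hX k, mul_nonneg hA.le (hY k),
            mul_nonneg hB.le (mul_nonneg (by positivity : (0:ℝ) ≤ (k:ℝ)) (hX k)),
            mul_le_mul_of_nonneg_left hXk hA.le]
end
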